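/- arXiv:2109.13083 — 2 statements merged into one kernel-verified Lean document; each statement's English description precedes it below -/
import Mathlib

section
/- Let X be a nonnegative random variable on a probability space. Then for every δ > 0, ∑_{n=1}^∞ P(X ≥ δ·√(n·loglog n)) < ∞ if and only if E[X²/loglog X] < ∞, where loglog x := ln max(e, ln max(e,x)). -/
/-!
The tail sum is `E[N(X / δ)]`, where `N(y) = #{n | d_{n+1} ≤ y}` counts the normalizers below `y`.
Inverting `n loglog n ≤ y²` shows that `N(y)` is comparable to `y² / loglog y` up to affine
constants, and since `loglog` varies slowly, `y² / loglog y` at `y = X / δ` is in turn comparable to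
`X² / loglog X`.
-/

open MeasureTheory

/-- `loglog x = ln (max e (ln (max e x)))`. -/
noncomputable def loglog (x : ℝ) : ℝ :=
  Real.log (max (Real.exp 1) (Real.log (max (Real.exp 1) x)))

open Real
open scoped ENNReal

lemma one_le_log_max_exp_one (x : ℝ) : 1 ≤ log (max (exp 1) x) :=
  (log_exp 1).symm.le.trans (log_le_log (exp_pos 1) (le_max_left _ _))

lemma one_le_loglog (x : ℝ) : 1 ≤ loglog x := one_le_log_max_exp_one _

lemma loglog_pos (x : ℝ) : 0 < loglog x := one_pos.trans_le (one_le_loglog x)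

lemma sq_div_loglog_nonneg (x y : ℝ) : 0 ≤ x ^ 2 / loglog y :=
  div_nonneg (sq_nonneg x) (loglog_pos y).le

lemma loglog_monotone : Monotone loglog := fun a b hab => by
  unfold loglog
  gcongr

lemma measurable_loglog : Measurable loglog :=
  measurable_log.comp <|
    measurable_const.max (measurable_log.comp (measurable_const.max measurable_id))

lemma loglog_le_max (x : ℝ) : loglog x ≤ max (exp 1) x := by
  have hpos : ∀ y, 0 ≤ max (exp 1) y := fun y => (exp_pos 1).le.trans (le_max_left _ _)
  calc loglog x ≤ max (exp 1) (log (max (exp 1) x)) := log_le_self (hpos _)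
    _ ≤ max (exp 1) (max (exp 1) x) := max_le_max le_rfl (log_le_self (hpos x))
    _ = max (exp 1) x := by rw [← max_assoc, max_self]

lemma le_exp_one_add_sq_div_loglog (x : ℝ) : x ≤ exp 1 + x ^ 2 / loglog x := by
  rcases le_or_gt x (exp 1) with hx | hx
  · linarith [sq_div_loglog_nonneg x x]
  · have hle : loglog x ≤ x := (loglog_le_max x).trans (max_eq_right hx.le).le
    have hx0 : 0 < x := (exp_pos 1).trans hx
    have : x ≤ x ^ 2 / loglog x := by
      rw [le_div_iff₀ (loglog_pos x)]; nlinarith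
    linarith [exp_pos 1]

lemma loglog_mul_pow_le {c x : ℝ} {k : ℕ} (hc : 1 ≤ c) (hk : 0 < k) (hx : 0 ≤ x) :
    loglog (c * x ^ k) ≤ loglog x + log (k * (1 + log c)) := by
  set L := log (max (exp 1) x)
  set M := max (exp 1) L
  have he : 1 ≤ exp 1 := one_le_exp zero_le_one
  have hk1 : (1 : ℝ) ≤ k := by exact_mod_cast hk
  have hlogc : 0 ≤ log c := log_nonneg hc
  have hL : 1 ≤ L := one_le_log_max_exp_one x
  have hmax : max (exp 1) (c * x ^ k) ≤ c * max (exp 1) x ^ k := by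
    have hpow : max (exp 1) x ≤ max (exp 1) x ^ k :=
      le_self_pow₀ (he.trans (le_max_left _ _)) hk.ne'
    refine max_le ?_ (by gcongr; exact le_max_right _ _)
    nlinarith [le_max_left (exp 1) x]
  have hlog : log (max (exp 1) (c * x ^ k)) ≤ log c + k * L := by
    calc log (max (exp 1) (c * x ^ k)) ≤ log (c * max (exp 1) x ^ k) :=
          log_le_log (lt_max_of_lt_left (exp_pos 1)) hmax
      _ = log c + k * L := by
          rw [log_mul (by positivity) (by positivity), log_pow]
  have hinner : max (exp 1) (log (max (exp 1) (c * x ^ k))) ≤ k * (1 + log c) * M := by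
    have hkc : 1 ≤ k * (1 + log c) := by nlinarith
    have hkL : 1 ≤ k * L := one_le_mul_of_one_le_of_one_le hk1 hL
    refine max_le ?_ ?_
    · nlinarith [le_max_left (exp 1) L]
    · calc log (max (exp 1) (c * x ^ k)) ≤ log c + k * L := hlog
        _ ≤ k * (1 + log c) * L := by nlinarith [mul_nonneg hlogc (sub_nonneg.2 hkL)]
        _ ≤ k * (1 + log c) * M := by gcongr; exact le_max_right _ _
  calc loglog (c * x ^ k) ≤ log (k * (1 + log c) * M) :=
        log_le_log (lt_max_of_lt_left (exp_pos 1)) hinner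
    _ = loglog x + log (k * (1 + log c)) := by
        rw [log_mul (by positivity) (by positivity), add_comm]; rfl

lemma exists_loglog_mul_pow_le_mul (c : ℝ) {k : ℕ} (hk : 0 < k) :
    ∃ K, 0 ≤ K ∧ ∀ x, 0 ≤ x → loglog (c * x ^ k) ≤ K * loglog x := by
  set b := log (k * (1 + log (max 1 c)))
  have hb : 0 ≤ b := log_nonneg <| one_le_mul_of_one_le_of_one_le (by exact_mod_cast hk)
    (le_add_of_nonneg_right (log_nonneg (le_max_left 1 c)))
  refine ⟨1 + b, by positivity, fun x hx => ?_⟩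
  calc loglog (c * x ^ k) ≤ loglog (max 1 c * x ^ k) :=
        loglog_monotone (by gcongr; exact le_max_right 1 c)
    _ ≤ loglog x + b := loglog_mul_pow_le (le_max_left 1 c) hk hx
    _ ≤ (1 + b) * loglog x := by nlinarith [one_le_loglog x]

lemma exists_sq_div_loglog_mul_le {c : ℝ} (hc : 0 < c) :
    ∃ K, 0 ≤ K ∧ ∀ x, 0 ≤ x → (c * x) ^ 2 / loglog (c * x) ≤ K * (x ^ 2 / loglog x) := by
  obtain ⟨K, hK, hloglog⟩ := exists_loglog_mul_pow_le_mul c⁻¹ one_pos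
  refine ⟨c ^ 2 * K, by positivity, fun x hx => ?_⟩
  have h := hloglog (c * x) (by positivity)
  rw [pow_one, inv_mul_cancel_left₀ hc.ne'] at h
  calc (c * x) ^ 2 / loglog (c * x) = c ^ 2 * x ^ 2 / loglog (c * x) := by ring
    _ ≤ c ^ 2 * K * x ^ 2 / loglog x := by
        rw [div_le_div_iff₀ (loglog_pos _) (loglog_pos _)]
        nlinarith [mul_le_mul_of_nonneg_left h (by positivity : 0 ≤ c ^ 2 * x ^ 2)]
    _ = c ^ 2 * K * (x ^ 2 / loglog x) := by ring

/-- The normalizer `d_{n+1} = √((n+1) loglog (n+1))`, indexed from `0`. -/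
noncomputable def lilNormalizer (n : ℕ) : ℝ := √((n + 1) * loglog (n + 1))

lemma lilNormalizer_le_iff {n : ℕ} {y : ℝ} (hy : 0 ≤ y) :
    lilNormalizer n ≤ y ↔ (n + 1) * loglog (n + 1) ≤ y ^ 2 := by
  rw [lilNormalizer, sqrt_le_iff, and_iff_right hy]

lemma natCast_lt_of_lilNormalizer_le {n : ℕ} {y : ℝ} (h : lilNormalizer n ≤ y) :
    (n : ℝ) < y + y ^ 2 / loglog y := by
  have hy : 0 ≤ y := (sqrt_nonneg _).trans h
  have hsq := (lilNormalizer_le_iff hy).1 h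
  rcases le_or_gt ((n : ℝ) + 1) y with hny | hny
  · linarith [sq_div_loglog_nonneg y y]
  · have : (n + 1) * loglog y ≤ y ^ 2 :=
      (mul_le_mul_of_nonneg_left (loglog_monotone hny.le) (by positivity)).trans hsq
    have : (n : ℝ) + 1 ≤ y ^ 2 / loglog y := (le_div_iff₀ (loglog_pos y)).2 this
    linarith

lemma lilNormalizer_le_of_le {n : ℕ} {y : ℝ} (hy : 0 ≤ y)
    (h : (n : ℝ) + 1 ≤ y ^ 2 / loglog (y ^ 2)) : lilNormalizer n ≤ y := by
  have hny : (n : ℝ) + 1 ≤ y ^ 2 := h.trans (div_le_self (sq_nonneg y) (one_le_loglog _))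
  rw [lilNormalizer_le_iff hy]
  calc (n + 1) * loglog (n + 1) ≤ y ^ 2 / loglog (y ^ 2) * loglog (y ^ 2) :=
        mul_le_mul h (loglog_monotone hny) (loglog_pos _).le (sq_div_loglog_nonneg _ _)
    _ = y ^ 2 := div_mul_cancel₀ _ (loglog_pos _).ne'

lemma encard_lilNormalizer_le_le {y : ℝ} (hy : 0 ≤ y) :
    ({n | lilNormalizer n ≤ y}.encard : ℝ≥0∞) ≤ ENNReal.ofReal (y + y ^ 2 / loglog y + 1) := by
  set B := y + y ^ 2 / loglog y
  have hsub : {n | lilNormalizer n ≤ y} ⊆ Finset.range ⌈B⌉₊ := fun n hn =>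
    Finset.mem_range.2 (Nat.lt_ceil.2 (natCast_lt_of_lilNormalizer_le hn))
  have hcard := Set.encard_le_encard hsub
  rw [Set.encard_coe_eq_coe_finsetCard, Finset.card_range] at hcard
  calc ({n | lilNormalizer n ≤ y}.encard : ℝ≥0∞) ≤ ⌈B⌉₊ := by exact_mod_cast hcard
    _ ≤ ENNReal.ofReal (B + 1) := by
        rw [← ENNReal.ofReal_natCast]
        exact ENNReal.ofReal_le_ofReal
          (Nat.ceil_lt_add_one (add_nonneg hy (sq_div_loglog_nonneg y y))).le

lemma floor_le_encard_lilNormalizer_le {y : ℝ} (hy : 0 ≤ y) :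
    (⌊y ^ 2 / loglog (y ^ 2)⌋₊ : ℝ≥0∞) ≤ {n | lilNormalizer n ≤ y}.encard := by
  have hsub : (Finset.range ⌊y ^ 2 / loglog (y ^ 2)⌋₊ : Set ℕ) ⊆ {n | lilNormalizer n ≤ y} :=
    fun n hn => lilNormalizer_le_of_le hy <| by
      have : ((n + 1 : ℕ) : ℝ) ≤ ⌊y ^ 2 / loglog (y ^ 2)⌋₊ :=
        Nat.cast_le.2 (Nat.add_one_le_of_lt (Finset.mem_range.1 hn))
      push_cast at this
      exact this.trans (Nat.floor_le (sq_div_loglog_nonneg _ _))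
  have hcard := Set.encard_le_encard hsub
  rw [Set.encard_coe_eq_coe_finsetCard, Finset.card_range] at hcard
  exact_mod_cast hcard

lemma setOf_mul_lilNormalizer_le {δ : ℝ} (hδ : 0 < δ) (x : ℝ) :
    {n | δ * lilNormalizer n ≤ x} = {n | lilNormalizer n ≤ δ⁻¹ * x} := by
  ext n; exact (le_inv_mul_iff₀ hδ).symm

lemma exists_encard_mul_lilNormalizer_le_le {δ : ℝ} (hδ : 0 < δ) :
    ∃ C : ℝ≥0∞, C ≠ ∞ ∧ ∀ x, 0 ≤ x →
      ({n | δ * lilNormalizer n ≤ x}.encard : ℝ≥0∞) ≤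
        C * (ENNReal.ofReal (x ^ 2 / loglog x) + 1) := by
  obtain ⟨K, hK, hscale⟩ := exists_sq_div_loglog_mul_le (inv_pos.2 hδ)
  refine ⟨ENNReal.ofReal (exp 1 + 1 + 2 * K), ENNReal.ofReal_ne_top, fun x hx => ?_⟩
  set y := δ⁻¹ * x
  have hy : 0 ≤ y := by positivity
  have hg := sq_div_loglog_nonneg x x
  have hreal : y + y ^ 2 / loglog y + 1 ≤ (exp 1 + 1 + 2 * K) * (x ^ 2 / loglog x + 1) := by
    nlinarith [le_exp_one_add_sq_div_loglog y, hscale x hx, exp_pos 1]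
  rw [setOf_mul_lilNormalizer_le hδ]
  calc ({n | lilNormalizer n ≤ y}.encard : ℝ≥0∞)
      ≤ ENNReal.ofReal (y + y ^ 2 / loglog y + 1) := encard_lilNormalizer_le_le hy
    _ ≤ ENNReal.ofReal ((exp 1 + 1 + 2 * K) * (x ^ 2 / loglog x + 1)) :=
        ENNReal.ofReal_le_ofReal hreal
    _ = _ := by
        rw [ENNReal.ofReal_mul (by positivity), ENNReal.ofReal_add hg zero_le_one,
          ENNReal.ofReal_one]

lemma exists_sq_div_loglog_le_mul_sq_div_loglog_sq :
    ∃ K, 0 ≤ K ∧ ∀ y, 0 ≤ y → y ^ 2 / loglog y ≤ K * (y ^ 2 / loglog (y ^ 2)) := by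
  obtain ⟨K, hK, hloglog⟩ := exists_loglog_mul_pow_le_mul 1 two_pos
  refine ⟨K, hK, fun y hy => ?_⟩
  have h := hloglog y hy
  rw [one_mul] at h
  rw [mul_div_assoc', div_le_div_iff₀ (loglog_pos _) (loglog_pos _)]
  nlinarith [mul_le_mul_of_nonneg_left h (sq_nonneg y)]

lemma exists_le_mul_encard_mul_lilNormalizer_le {δ : ℝ} (hδ : 0 < δ) :
    ∃ C : ℝ≥0∞, C ≠ ∞ ∧ ∀ x, 0 ≤ x →
      ENNReal.ofReal (x ^ 2 / loglog x) ≤ C * ({n | δ * lilNormalizer n ≤ x}.encard + 1) := by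
  obtain ⟨K₁, hK₁, hscale⟩ := exists_sq_div_loglog_mul_le hδ
  obtain ⟨K₂, hK₂, hsquare⟩ := exists_sq_div_loglog_le_mul_sq_div_loglog_sq
  refine ⟨ENNReal.ofReal (K₁ * K₂), ENNReal.ofReal_ne_top, fun x hx => ?_⟩
  set y := δ⁻¹ * x
  have hy : 0 ≤ y := by positivity
  have hfloor := (Nat.lt_floor_add_one (y ^ 2 / loglog (y ^ 2))).le
  have hreal : x ^ 2 / loglog x ≤ K₁ * K₂ * (⌊y ^ 2 / loglog (y ^ 2)⌋₊ + 1) := by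
    have hxy : x = δ * y := (mul_inv_cancel_left₀ hδ.ne' x).symm
    calc x ^ 2 / loglog x ≤ K₁ * (y ^ 2 / loglog y) := hxy ▸ hscale y hy
      _ ≤ K₁ * (K₂ * (y ^ 2 / loglog (y ^ 2))) := by gcongr; exact hsquare y hy
      _ ≤ K₁ * K₂ * (⌊y ^ 2 / loglog (y ^ 2)⌋₊ + 1) := by rw [← mul_assoc]; gcongr
  rw [setOf_mul_lilNormalizer_le hδ]
  calc ENNReal.ofReal (x ^ 2 / loglog x)
      ≤ ENNReal.ofReal (K₁ * K₂ * (⌊y ^ 2 / loglog (y ^ 2)⌋₊ + 1)) :=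
        ENNReal.ofReal_le_ofReal hreal
    _ = ENNReal.ofReal (K₁ * K₂) * (⌊y ^ 2 / loglog (y ^ 2)⌋₊ + 1) := by
        rw [ENNReal.ofReal_mul (by positivity), ENNReal.ofReal_add (by positivity) zero_le_one,
          ENNReal.ofReal_natCast, ENNReal.ofReal_one]
    _ ≤ _ := by gcongr; exact floor_le_encard_lilNormalizer_le hy

lemma tsum_measure_eq_lintegral_encard {Ω ι : Type*} [MeasurableSpace Ω] [Countable ι]
    {μ : Measure Ω} {A : ι → Set Ω} (hA : ∀ i, MeasurableSet (A i)) :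
    ∑' i, μ (A i) = ∫⁻ ω, ({i | ω ∈ A i}.encard : ℝ≥0∞) ∂μ := by
  calc ∑' i, μ (A i) = ∑' i, ∫⁻ ω, (A i).indicator 1 ω ∂μ := by
        simp_rw [lintegral_indicator_one (hA _)]
    _ = ∫⁻ ω, ∑' i, (A i).indicator 1 ω ∂μ :=
        (lintegral_tsum fun i => (measurable_one.indicator (hA i)).aemeasurable).symm
    _ = ∫⁻ ω, ({i | ω ∈ A i}.encard : ℝ≥0∞) ∂μ := by
        congr 1; funext ω
        rw [← ENNReal.tsum_set_one, tsum_subtype _ fun _ => (1 : ℝ≥0∞)]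
        rfl

lemma lintegral_lt_top_of_le_mul_add_one {Ω : Type*} [MeasurableSpace Ω] {μ : Measure Ω}
    [IsFiniteMeasure μ] {F G : Ω → ℝ≥0∞} {C : ℝ≥0∞} (hC : C ≠ ∞) (hG : ∫⁻ ω, G ω ∂μ < ∞)
    (hFG : ∀ᵐ ω ∂μ, F ω ≤ C * (G ω + 1)) : ∫⁻ ω, F ω ∂μ < ∞ :=
  calc ∫⁻ ω, F ω ∂μ ≤ ∫⁻ ω, C * (G ω + 1) ∂μ := lintegral_mono_ae hFG
    _ = C * (∫⁻ ω, G ω ∂μ + μ Set.univ) := by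
        rw [lintegral_const_mul' _ _ hC, lintegral_add_right _ measurable_const, lintegral_const,
          one_mul]
    _ < ∞ := ENNReal.mul_lt_top hC.lt_top (ENNReal.add_lt_top.2 ⟨hG, measure_lt_top μ _⟩)

theorem tail_sum_iff_loglog_integrable {Ω : Type*} [MeasurableSpace Ω]
    (P : Measure Ω) [IsProbabilityMeasure P]
    (X : Ω → ℝ) (hmeas : Measurable X) (hnonneg : ∀ ω, 0 ≤ X ω) :
    ∀ δ : ℝ, 0 < δ →
      ((∑' n : ℕ, P {ω | δ * Real.sqrt ((n + 1) * loglog (n + 1)) ≤ X ω}) < ⊤ ↔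
        Integrable (fun ω => X ω ^ 2 / loglog (X ω)) P) := by
  intro δ hδ
  have hsum : ∑' n : ℕ, P {ω | δ * Real.sqrt ((n + 1) * loglog (n + 1)) ≤ X ω} =
      ∫⁻ ω, ({n | δ * lilNormalizer n ≤ X ω}.encard : ℝ≥0∞) ∂P :=
    tsum_measure_eq_lintegral_encard fun n => measurableSet_le measurable_const hmeas
  have hg : Measurable fun ω => X ω ^ 2 / loglog (X ω) :=
    (hmeas.pow_const 2).div (measurable_loglog.comp hmeas)
  rw [hsum, ← lintegral_ofReal_ne_top_iff_integrable hg.aestronglyMeasurable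
    (ae_of_all _ fun ω => sq_div_loglog_nonneg _ _), ← lt_top_iff_ne_top]
  obtain ⟨C₁, hC₁, hupper⟩ := exists_encard_mul_lilNormalizer_le_le hδ
  obtain ⟨C₂, hC₂, hlower⟩ := exists_le_mul_encard_mul_lilNormalizer_le hδ
  constructor
  · intro h
    exact lintegral_lt_top_of_le_mul_add_one hC₂ h (ae_of_all _ fun ω => hlower _ (hnonneg ω))
  · intro h
    exact lintegral_lt_top_of_le_mul_add_one hC₁ h (ae_of_all _ fun ω => hupper _ (hnonneg ω))
end

section
/- Let X₁,…,X_n be independent random variables on a probability space with EX_i = 0 and X_i ≤ y almost surely for some y > 0, and let B² = ∑_{i=1}^n E X_i². Then for every x > 0, P(max_{k≤n} ∑_{i=1}^k X_i ≥ x) ≤ exp( −x²/(2(xy + B²)) · (1 + (2/3)·ln(1 + xy/B²)) ). -/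
/-!
For `t ≥ 0` the process `exp (t * S k)`, `S k = ∑ i < k, X i`, is a nonnegative submartingale for
the filtration of the past (independence, and `E exp (t X i) ≥ exp (t E X i) = 1`), so Doob's
maximal inequality bounds the maximal tail by the Chernoff bound `e^{-tx} ∏ E e^{t X i}`.
Since `(e^s - 1 - s) / s²` is nondecreasing, `X i ≤ y` gives Bennett's estimate
`E e^{t X i} ≤ exp (E X i² (e^{ty} - 1 - ty) / y²)`, and `t = log (1 + u) / y` with `u = xy / B²`
turns the exponent into `-(B² / y²) ((1 + u) log (1 + u) - u)`. The claim then reduces to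
`(1 + u) log (1 + u) - u ≥ u² / (2 (1 + u)) (1 + 2/3 log (1 + u))`, a consequence of the
Padé lower bound `log (1 + u) ≥ (6u + 3u²) / (6 + 6u + u²)`.
-/

open MeasureTheory ProbabilityTheory Real Finset

lemma monotoneOn_of_hasDerivAt_nonneg {D : Set ℝ} (hD : Convex ℝ D) {f f' : ℝ → ℝ}
    (hf : ∀ x ∈ D, HasDerivAt f (f' x) x) (hf' : ∀ x ∈ D, 0 ≤ f' x) : MonotoneOn f D :=
  monotoneOn_of_hasDerivWithinAt_nonneg hD
    (fun x hx ↦ (hf x hx).continuousAt.continuousWithinAt)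
    (fun x hx ↦ (hf x (interior_subset hx)).hasDerivWithinAt)
    (fun x hx ↦ hf' x (interior_subset hx))

namespace Real

lemma exp_le_one_add_add_sq_div_two {x : ℝ} (hx : x ≤ 0) : exp x ≤ 1 + x + x ^ 2 / 2 := by
  have hcubic : 1 - x + x ^ 2 / 2 - x ^ 3 / 6 ≤ exp (-x) := by
    have := sum_le_exp_of_nonneg (neg_nonneg.2 hx) 4
    norm_num [Finset.sum_range_succ, Nat.factorial] at this
    linarith
  have hc : 0 < 1 - x + x ^ 2 / 2 - x ^ 3 / 6 := by nlinarith [pow_two_nonneg x]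
  refine le_of_mul_le_mul_right ?_ hc
  calc exp x * (1 - x + x ^ 2 / 2 - x ^ 3 / 6) ≤ exp x * exp (-x) := by gcongr
    _ = 1 := by rw [← exp_add, add_neg_cancel, exp_zero]
    _ ≤ (1 + x + x ^ 2 / 2) * (1 - x + x ^ 2 / 2 - x ^ 3 / 6) := by
      nlinarith [pow_two_nonneg x, pow_two_nonneg (x ^ 2)]

lemma two_sub_mul_exp_le {x : ℝ} (hx : 0 ≤ x) : (2 - x) * exp x ≤ 2 + x := by
  rcases lt_or_ge x 2 with hx2 | hx2
  · rw [← le_div_iff₀' (by linarith)]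
    exact exp_le_two_add_div_two_sub hx hx2
  · nlinarith [exp_pos x]

lemma monotoneOn_exp_sub_one_sub_div_sq :
    MonotoneOn (fun x ↦ (exp x - 1 - x) / x ^ 2) (Set.Ioi 0) := by
  refine monotoneOn_of_hasDerivAt_nonneg (f' := fun x ↦ ((x - 2) * exp x + x + 2) / x ^ 3)
    (convex_Ioi 0) (fun x (hx : 0 < x) ↦ ?_) (fun x (hx : 0 < x) ↦ ?_)
  · refine ((((hasDerivAt_exp x).sub_const 1).fun_sub (hasDerivAt_id' x)).fun_div
      (hasDerivAt_pow 2 x) (by positivity)).congr_deriv ?_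
    field_simp
    ring
  · have := two_sub_mul_exp_le hx.le
    exact div_nonneg (by linarith) (by positivity)

lemma exp_sub_one_sub_mul_sq_le {a b : ℝ} (hab : a ≤ b) (hb : 0 ≤ b) :
    (exp a - 1 - a) * b ^ 2 ≤ a ^ 2 * (exp b - 1 - b) := by
  rcases le_or_gt a 0 with ha | ha
  · have h₁ := exp_le_one_add_add_sq_div_two ha
    have h₂ := quadratic_le_exp_of_nonneg hb
    calc (exp a - 1 - a) * b ^ 2 ≤ a ^ 2 / 2 * b ^ 2 := by gcongr; linarith
      _ ≤ a ^ 2 * (exp b - 1 - b) := by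
        rw [div_mul_eq_mul_div, mul_div_assoc]; gcongr; linarith
  · have := monotoneOn_exp_sub_one_sub_div_sq ha (ha.trans_le hab) hab
    rwa [div_le_div_iff₀ (pow_pos ha 2) (pow_pos (ha.trans_le hab) 2), mul_comm _ (a ^ 2)] at this

lemma div_le_log_one_add {u : ℝ} (hu : 0 ≤ u) :
    (6 * u + 3 * u ^ 2) / (6 + 6 * u + u ^ 2) ≤ log (1 + u) := by
  let f u := log (1 + u) - (6 * u + 3 * u ^ 2) / (6 + 6 * u + u ^ 2)
  have hmono : MonotoneOn f (Set.Ici 0) := by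
    refine monotoneOn_of_hasDerivAt_nonneg
      (f' := fun u ↦ u ^ 4 / ((1 + u) * (6 + 6 * u + u ^ 2) ^ 2)) (convex_Ici 0)
      (fun u (hu : 0 ≤ u) ↦ ?_) (fun u (hu : 0 ≤ u) ↦ by positivity)
    have hlog := ((hasDerivAt_id' u).const_add 1).log (by positivity)
    refine (hlog.fun_sub ((((hasDerivAt_id' u).const_mul 6).fun_add
      ((hasDerivAt_pow 2 u).const_mul 3)).fun_div (((hasDerivAt_id' u).const_mul 6).const_add 6
        |>.fun_add (hasDerivAt_pow 2 u)) (by positivity))).congr_deriv ?_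
    field_simp
    ring
  simpa [f] using hmono Set.self_mem_Ici hu hu

lemma sq_div_mul_one_add_log_le {u : ℝ} (hu : 0 ≤ u) :
    u ^ 2 / (2 * (1 + u)) * (1 + 2 / 3 * log (1 + u)) ≤ (1 + u) * log (1 + u) - u := by
  have hpade := div_le_log_one_add hu
  rw [div_le_iff₀ (by positivity)] at hpade
  rw [div_mul_eq_mul_div, div_le_iff₀ (by positivity)]
  nlinarith [mul_nonneg hu (log_nonneg (by linarith : (1 : ℝ) ≤ 1 + u)), mul_nonneg hu hu]

lemma exp_mul_le_one_add_add_sq_mul {t y z : ℝ} (ht : 0 ≤ t) (hy : 0 < y) (hz : z ≤ y) :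
    exp (t * z) ≤ 1 + t * z + z ^ 2 * ((exp (t * y) - 1 - t * y) / y ^ 2) := by
  rcases ht.eq_or_lt with rfl | ht
  · simp
  have h := exp_sub_one_sub_mul_sq_le (mul_le_mul_of_nonneg_left hz ht.le) (by positivity)
  rw [mul_pow, mul_pow, mul_left_comm, mul_assoc, mul_le_mul_iff_right₀ (by positivity)] at h
  rw [← sub_le_iff_le_add', mul_div_assoc', le_div_iff₀ (by positivity)]
  linarith

lemma exists_bennett_exponent_le {x y B : ℝ} (hx : 0 < x) (hy : 0 < y) (hB : 0 ≤ B) :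
    ∃ t, 0 ≤ t ∧ B * ((exp (t * y) - 1 - t * y) / y ^ 2) - t * x ≤
      -(x ^ 2 / (2 * (x * y + B))) * (1 + 2 / 3 * log (1 + x * y / B)) := by
  rcases hB.eq_or_lt with rfl | hB
  · -- `x * y / 0 = 0`, so the right-hand side is `-x / (2 * y)`
    refine ⟨1 / (2 * y), by positivity, le_of_eq ?_⟩
    field_simp
    simp only [div_zero, add_zero, log_one, mul_zero]
    ring
  set u := x * y / B
  have hu : 0 < u := by positivity
  have hx_eq : x = u * B / y := by simp only [u]; field_simp
  refine ⟨log (1 + u) / y, div_nonneg (log_nonneg (by linarith)) hy.le, ?_⟩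
  have hexp : exp (log (1 + u) / y * y) = 1 + u := by
    rw [div_mul_cancel₀ _ hy.ne', exp_log (by positivity)]
  rw [hexp, hx_eq]
  have key := sq_div_mul_one_add_log_le hu.le
  have hden : u * B / y * y + B = B * (1 + u) := by field_simp; ring
  rw [hden]
  calc B * ((1 + u - 1 - log (1 + u) / y * y) / y ^ 2) - log (1 + u) / y * (u * B / y)
      = -(B / y ^ 2) * ((1 + u) * log (1 + u) - u) := by field_simp; ring
    _ ≤ -(B / y ^ 2) * (u ^ 2 / (2 * (1 + u)) * (1 + 2 / 3 * log (1 + u))) :=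
      mul_le_mul_of_nonpos_left key (by simp only [neg_nonpos]; positivity)
    _ = _ := by field_simp

end Real

namespace ProbabilityTheory

variable {Ω : Type*} [mΩ : MeasurableSpace Ω] {μ : Measure Ω} {X : ℕ → Ω → ℝ} {t : ℝ}

def pastFiltration (X : ℕ → Ω → ℝ) (hX : ∀ i, Measurable (X i)) : Filtration ℕ mΩ where
  seq k := ⨆ j ∈ Set.Iio k, MeasurableSpace.comap (X j) inferInstance
  mono' _ _ hkl := biSup_mono fun _ hj ↦ lt_of_lt_of_le hj hkl
  le' _ := iSup₂_le fun j _ ↦ (hX j).comap_le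

lemma measurable_pastFiltration {hX : ∀ i, Measurable (X i)} {j k : ℕ} (hjk : j < k) :
    Measurable[pastFiltration X hX k] (X j) :=
  Measurable.of_comap_le (le_iSup₂ (f := fun j (_ : j ∈ Set.Iio k) ↦
    MeasurableSpace.comap (X j) inferInstance) j hjk)

lemma iIndepFun.indep_pastFiltration (hX : ∀ i, Measurable (X i)) (hind : iIndepFun X μ)
    (k : ℕ) : Indep (MeasurableSpace.comap (X k) inferInstance) (pastFiltration X hX k) μ := by
  have := indep_iSup_of_disjoint (fun i ↦ (hX i).comap_le) hind.iIndep
    (S := {k}) (T := Set.Iio k) (by simp)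
  rwa [_root_.iSup_singleton] at this

lemma one_le_mgf_of_integral_eq_zero [IsProbabilityMeasure μ] {Y : Ω → ℝ} (hY : Integrable Y μ)
    (hmean : ∫ ω, Y ω ∂μ = 0) (hexp : Integrable (fun ω ↦ exp (t * Y ω)) μ) :
    1 ≤ mgf Y μ t := by
  have := integral_mono ((integrable_const 1).add (hY.const_mul t)) hexp
    fun ω ↦ by simpa [add_comm] using add_one_le_exp (t * Y ω)
  simpa [mgf, integral_add (integrable_const 1) (hY.const_mul t), integral_const_mul, hmean]
    using this

lemma mgf_le_exp_integral_sq_mul [IsProbabilityMeasure μ] {Y : Ω → ℝ} {y : ℝ} (hY : MemLp Y 2 μ)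
    (hmean : ∫ ω, Y ω ∂μ = 0) (hy : 0 < y) (hYy : ∀ᵐ ω ∂μ, Y ω ≤ y) (ht : 0 ≤ t) :
    mgf Y μ t ≤ exp ((∫ ω, Y ω ^ 2 ∂μ) * ((exp (t * y) - 1 - t * y) / y ^ 2)) := by
  set g := (exp (t * y) - 1 - t * y) / y ^ 2
  have hY₁ : Integrable Y μ := hY.integrable one_le_two
  have hlin : Integrable (fun ω ↦ 1 + t * Y ω) μ := (integrable_const 1).add (hY₁.const_mul t)
  have hquad : Integrable (fun ω ↦ 1 + t * Y ω + Y ω ^ 2 * g) μ :=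
    hlin.add (hY.integrable_sq.mul_const g)
  calc mgf Y μ t ≤ ∫ ω, (1 + t * Y ω + Y ω ^ 2 * g) ∂μ := by
        refine integral_mono_ae (integrable_exp_mul_of_le t y ht hY₁.aemeasurable hYy) hquad ?_
        filter_upwards [hYy] with ω hω
        exact exp_mul_le_one_add_add_sq_mul ht hy hω
    _ = 1 + (∫ ω, Y ω ^ 2 ∂μ) * g := by
        rw [integral_add hlin (hY.integrable_sq.mul_const g),
          integral_add (integrable_const 1) (hY₁.const_mul t), integral_const_mul, hmean,
          integral_mul_const]
        simp
    _ ≤ exp ((∫ ω, Y ω ^ 2 ∂μ) * g) := by linarith [add_one_le_exp ((∫ ω, Y ω ^ 2 ∂μ) * g)]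

lemma iIndepFun.submartingale_exp_mul_sum [IsProbabilityMeasure μ] (hX : ∀ i, Measurable (X i))
    (hind : iIndepFun X μ) (hint : ∀ i, Integrable (fun ω ↦ exp (t * X i ω)) μ)
    (hmgf : ∀ i, 1 ≤ mgf (X i) μ t) :
    Submartingale (fun k ω ↦ exp (t * ∑ i ∈ range k, X i ω)) (pastFiltration X hX) μ := by
  set S := fun k ω ↦ exp (t * ∑ i ∈ range k, X i ω)
  have hS_int : ∀ k, Integrable (S k) μ := fun k ↦ by
    simpa using hind.integrable_exp_mul_sum hX (s := range k) fun i _ ↦ hint i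
  have hadapted : StronglyAdapted (pastFiltration X hX) S := fun k ↦
    ((Finset.measurable_sum _ fun j hj ↦
      measurable_pastFiltration (mem_range.1 hj)).const_mul t).exp.stronglyMeasurable
  refine submartingale_nat hadapted hS_int fun k ↦ ?_
  have hstep : S (k + 1) = S k * fun ω ↦ exp (t * X k ω) := by
    ext ω
    simp [S, sum_range_succ, mul_add, exp_add]
  have hcond : μ[fun ω ↦ exp (t * X k ω) | pastFiltration X hX k] =ᵐ[μ] fun _ ↦ mgf (X k) μ t :=
    condExp_indep_eq (hX k).comap_le ((pastFiltration X hX).le k)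
      ((comap_measurable (X k)).const_mul t).exp.stronglyMeasurable
      (hind.indep_pastFiltration hX k)
  filter_upwards [condExp_mul_of_stronglyMeasurable_left (hadapted k) (hstep ▸ hS_int (k + 1))
    (hint k), hcond] with ω hmul hmgfω
  rw [hstep, hmul, Pi.mul_apply, hmgfω]
  exact le_mul_of_one_le_right (exp_pos _).le (hmgf k)

lemma iIndepFun.measure_exists_sum_ge_le [IsProbabilityMeasure μ] (hX : ∀ i, Measurable (X i))
    (hind : iIndepFun X μ) (ht : 0 ≤ t) (hint : ∀ i, Integrable (fun ω ↦ exp (t * X i ω)) μ)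
    (hmgf : ∀ i, 1 ≤ mgf (X i) μ t) (n : ℕ) (x : ℝ) :
    μ {ω | ∃ k ≤ n, x ≤ ∑ i ∈ range k, X i ω} ≤
      ENNReal.ofReal (exp (-(t * x)) * ∏ i ∈ range n, mgf (X i) μ t) := by
  set S := fun k ω ↦ exp (t * ∑ i ∈ range k, X i ω)
  set ε := (exp (t * x)).toNNReal
  set B := {ω | (ε : ℝ) ≤ (range (n + 1)).sup' nonempty_range_add_one fun k ↦ S k ω}
  have hsub : {ω | ∃ k ≤ n, x ≤ ∑ i ∈ range k, X i ω} ⊆ B := by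
    rintro ω ⟨k, hkn, hxk⟩
    refine le_trans ?_ (le_sup' (fun k ↦ S k ω) (mem_range_succ_iff.2 hkn))
    rw [Real.coe_toNNReal _ (exp_pos _).le]
    exact exp_le_exp.2 (mul_le_mul_of_nonneg_left hxk ht)
  have hdoob : ε * μ B ≤ ENNReal.ofReal (∏ i ∈ range n, mgf (X i) μ t) := by
    refine (maximal_ineq (hind.submartingale_exp_mul_sum hX hint hmgf)
      (fun k ω ↦ (exp_pos _).le) n).trans (ENNReal.ofReal_le_ofReal ?_)
    rw [← hind.mgf_sum hX]
    refine (setIntegral_le_integral ?_ (.of_forall fun ω ↦ (exp_pos _).le)).trans_eq ?_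
    · simpa using hind.integrable_exp_mul_sum hX (s := range n) fun i _ ↦ hint i
    · simp [mgf]
  calc μ {ω | ∃ k ≤ n, x ≤ ∑ i ∈ range k, X i ω} ≤ μ B := measure_mono hsub
    _ = ENNReal.ofReal (exp (-(t * x))) * (ε * μ B) := by
      rw [← mul_assoc, ENNReal.ofReal, ← ENNReal.coe_mul, ← Real.toNNReal_mul (exp_pos _).le,
        ← exp_add, neg_add_cancel, exp_zero, Real.toNNReal_one, ENNReal.coe_one, one_mul]
    _ ≤ ENNReal.ofReal (exp (-(t * x))) * ENNReal.ofReal (∏ i ∈ range n, mgf (X i) μ t) := by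
      gcongr
    _ = _ := (ENNReal.ofReal_mul (exp_pos _).le).symm

end ProbabilityTheory

theorem bennett_maximal_inequality {Ω : Type*} [MeasurableSpace Ω]
    (P : Measure Ω) [IsProbabilityMeasure P]
    (n : ℕ) (X : ℕ → Ω → ℝ) (hmeas : ∀ i, Measurable (X i))
    (hind : iIndepFun X P)
    (hL2 : ∀ i, MemLp (X i) 2 P)
    (hmean : ∀ i, ∫ ω, X i ω ∂P = 0)
    (y : ℝ) (hy : 0 < y) (hbdd : ∀ i, ∀ᵐ ω ∂P, X i ω ≤ y)
    (B2 : ℝ) (hB2 : B2 = ∑ i ∈ Finset.range n, ∫ ω, (X i ω) ^ 2 ∂P) :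
    ∀ x : ℝ, 0 < x →
      P {ω | ∃ k ≤ n, x ≤ ∑ i ∈ Finset.range k, X i ω} ≤
        ENNReal.ofReal (Real.exp (-(x ^ 2 / (2 * (x * y + B2))) *
          (1 + 2 / 3 * Real.log (1 + x * y / B2)))) := by
  intro x hx
  have hB2_nonneg : 0 ≤ B2 := hB2 ▸ sum_nonneg fun i _ ↦ integral_nonneg fun ω ↦ sq_nonneg _
  obtain ⟨t, ht, hexponent⟩ := exists_bennett_exponent_le hx hy hB2_nonneg
  set g := (exp (t * y) - 1 - t * y) / y ^ 2
  have hint i : Integrable (fun ω ↦ exp (t * X i ω)) P :=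
    integrable_exp_mul_of_le t y ht (hmeas i).aemeasurable (hbdd i)
  have hmgf_ge i : 1 ≤ mgf (X i) P t :=
    one_le_mgf_of_integral_eq_zero ((hL2 i).integrable one_le_two) (hmean i) (hint i)
  have hmgf_le i : mgf (X i) P t ≤ exp ((∫ ω, X i ω ^ 2 ∂P) * g) :=
    mgf_le_exp_integral_sq_mul (hL2 i) (hmean i) hy (hbdd i) ht
  calc P {ω | ∃ k ≤ n, x ≤ ∑ i ∈ range k, X i ω}
      ≤ ENNReal.ofReal (exp (-(t * x)) * ∏ i ∈ range n, mgf (X i) P t) :=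
        hind.measure_exists_sum_ge_le hmeas ht hint hmgf_ge n x
    _ ≤ ENNReal.ofReal (exp (-(t * x)) * ∏ i ∈ range n, exp ((∫ ω, X i ω ^ 2 ∂P) * g)) := by
        gcongr with i
        · exact fun i _ ↦ mgf_nonneg
        · exact hmgf_le i
    _ = ENNReal.ofReal (exp (B2 * g - t * x)) := by
        rw [← exp_sum, ← sum_mul, ← hB2, ← exp_add, neg_add_eq_sub]
    _ ≤ _ := by gcongr
end
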